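/- Let c > 0 and f_0 > 0. The sequence α_j = 2^{c/6} f_0^{1/2} 2^{−cj/3}, j ≥ 0, belongs to l²(ℕ) and satisfies the inviscid steady-state equations: −2^{c(j−1)} α_{j−1}² + 2^{cj} α_j α_{j+1} = f_j for all j ≥ 0 (with α_{−1} = 0), where f_0 > 0 and f_j = 0 for j ≥ 1. Equivalently, in the rescaled variables A_j = 2^{cj/3} 2^{−c/6} f_0^{−1/2} α_j, one has A_j = 1 for all j. -/
import Mathlib


open Filter MeasureTheory intervalIntegral

/-- Right-hand side of the dyadic model ODE for the `j`-th component: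
`d/dt a_j = f_j - ν 2^{2j} a_j + 2^{c(j-1)} a_{j-1}² - 2^{cj} a_j a_{j+1}`,
with the conventions `a_{-1} = 0`, `f_0 = f₀`, `f_j = 0` for `j ≥ 1`. -/
noncomputable def dyadicRHS (ν c f₀ : ℝ) (a : ℕ → ℝ) (j : ℕ) : ℝ :=
  (if j = 0 then f₀ else 0) - ν * (2 : ℝ) ^ (2 * j) * a j
    + (if j = 0 then 0 else (2 : ℝ) ^ (c * ((j : ℝ) - 1)) * a (j - 1) ^ 2)
    - (2 : ℝ) ^ (c * (j : ℝ)) * a j * a (j + 1)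

/-- A solution of the dyadic model on `[0, ∞)`: an `l²`-valued function whose
components are differentiable on `[0, ∞)` and satisfy the dyadic system. -/
def IsSolution (ν c f₀ : ℝ) (a : ℝ → ℕ → ℝ) : Prop :=
  (∀ t : ℝ, 0 ≤ t → Summable (fun j : ℕ => a t j ^ 2)) ∧
  ∀ j : ℕ, ∀ t : ℝ, 0 ≤ t →
    HasDerivWithinAt (fun s : ℝ => a s j) (dyadicRHS ν c f₀ (a t) j) (Set.Ici 0) t

/-- A fixed point of the dyadic model: an `l²` sequence `α` with
`ν 2^{2j} α_j - 2^{c(j-1)} α_{j-1}² + 2^{cj} α_j α_{j+1} = f_j` for all `j ≥ 0`. -/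
def IsFixedPoint (ν c f₀ : ℝ) (α : ℕ → ℝ) : Prop :=
  (Summable fun j : ℕ => α j ^ 2) ∧
  ∀ j : ℕ, dyadicRHS ν c f₀ α j = 0

theorem stmt_18 (c f₀ : ℝ) (hc : 0 < c) (hf : 0 < f₀)
    (α : ℕ → ℝ)
    (hαdef : ∀ j : ℕ, α j = (2 : ℝ) ^ (c / 6) * f₀ ^ ((1 : ℝ) / 2) * (2 : ℝ) ^ (-(c * (j : ℝ)) / 3)) :
    IsFixedPoint 0 c f₀ α ∧
    ∀ j : ℕ, (2 : ℝ) ^ (c * (j : ℝ) / 3) * (2 : ℝ) ^ (-(c / 6)) * f₀ ^ (-(1 : ℝ) / 2) * α j = 1 := by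
  have h2 : (0:ℝ) < 2 := two_pos
  have expand : ∀ x : ℝ, (2:ℝ)^x = Real.exp (Real.log 2 * x) :=
    fun x => Real.rpow_def_of_pos h2 x
  have expandf : ∀ x : ℝ, f₀^x = Real.exp (Real.log f₀ * x) :=
    fun x => Real.rpow_def_of_pos hf x
  have hA : ∀ j:ℕ, (2:ℝ)^(c*(j:ℝ)) * (α j * α (j+1)) = f₀ * (2:ℝ)^(c*(j:ℝ)/3) := by
    intro j
    rw [hαdef j, hαdef (j+1)]
    push_cast
    conv_rhs => rw [← Real.exp_log hf]
    simp only [expand, expandf, ← Real.exp_add, Real.exp_eq_exp]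
    ring
  have hB : ∀ j:ℕ, (2:ℝ)^(c*(j:ℝ)) * α j ^ 2 = f₀ * (2:ℝ)^(c*((j:ℝ)+1)/3) := by
    intro j
    rw [hαdef j]
    conv_rhs => rw [← Real.exp_log hf]
    simp only [pow_two, expand, expandf, ← Real.exp_add, Real.exp_eq_exp]
    ring
  refine ⟨⟨?_, ?_⟩, ?_⟩
  · have hsq : ∀ j:ℕ, α j ^ 2 = ((2:ℝ)^(c/3) * f₀) * ((2:ℝ)^(-(2*c/3)))^j := by
      intro j
      rw [← Real.rpow_natCast ((2:ℝ)^(-(2*c/3))) j, ← Real.rpow_mul (le_of_lt h2),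
        hαdef j]
      conv_rhs => rw [← Real.exp_log hf]
      simp only [pow_two, expand, expandf, ← Real.exp_add, Real.exp_eq_exp]
      ring
    have hr1 : (2:ℝ)^(-(2*c/3)) < 1 :=
      Real.rpow_lt_one_of_one_lt_of_neg one_lt_two (by linarith)
    have hr0 : (0:ℝ) ≤ (2:ℝ)^(-(2*c/3)) := Real.rpow_nonneg (le_of_lt h2) _
    have := (summable_geometric_of_lt_one hr0 hr1).mul_left ((2:ℝ)^(c/3) * f₀)
    exact this.congr fun j => (hsq j).symm
  · intro j
    cases j with
    | zero =>
        have := hA 0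
        simp only [Nat.cast_zero, mul_zero, zero_div, Real.rpow_zero, one_mul, mul_one,
          zero_add] at this
        simp only [dyadicRHS, Nat.cast_zero, mul_zero, Real.rpow_zero, one_mul,
          zero_mul, pow_zero, if_true, eq_self_iff_true, zero_add]
        norm_num
        linarith [this]
    | succ n =>
        have e1 := hB n
        have e2 := hA (n+1)
        simp only [dyadicRHS, Nat.succ_ne_zero, if_neg, Nat.add_sub_cancel, zero_mul,
          if_false]
        push_cast
        push_cast at e2
        have : c * ((n:ℝ) + 1 - 1) = c * (n:ℝ) := by ring
        rw [this]
        nlinarith [e1, e2]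
  · intro j
    rw [hαdef j]
    rw [show (1:ℝ) = Real.exp 0 from (Real.exp_zero).symm]
    simp only [expand, expandf, ← Real.exp_add, Real.exp_eq_exp]
    ring
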